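/- For θ ∈ [0, π/2] let |ψ_low(θ)⟩ := cos(θ/2)|+⟩|+⟩ + i·sin(θ/2)|−⟩|−⟩ where |±⟩ := (|0⟩±|1⟩)/√2, and let Ω ∈ [0, 4/3]. Then applying the phase-flip channel E³_Ω to each qubit yields M[(E³_Ω ⊗ E³_Ω)(|ψ_low(θ)⟩⟨ψ_low(θ)|)] = max(0, M₀·|1 − 3Ω/2| + (1/2)(1 − 3Ω/2)² − 1/2), where M₀ := M(|ψ_low(θ)⟩⟨ψ_low(θ)|) = sin θ. (This is the lower bound of entanglement reduction under local Pauli channels of average Ω.) -/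

import Mathlib

open Matrix Kronecker
open scoped ComplexOrder

noncomputable section

/-- 2×2 complex matrices (one qubit). -/
abbrev Mat2 := Matrix (Fin 2) (Fin 2) ℂ

/-- 4×4 complex matrices indexed by `(Fin 2) × (Fin 2)` (two qubits). -/
abbrev Mat4 := Matrix (Fin 2 × Fin 2) (Fin 2 × Fin 2) ℂ

/-- The identity and the three Pauli matrices: σ₀, σ₁, σ₂, σ₃. -/
def pauli : Fin 4 → Mat2 :=
  ![1, !![0, 1; 1, 0], !![0, -Complex.I; Complex.I, 0], !![1, 0; 0, -1]]

/-- Weights `(p₀, p₁, p₂, p₃)` with `p₀ := 4 - (p₁ + p₂ + p₃)`. -/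
def pw (p : Fin 3 → ℝ) : Fin 4 → ℝ := ![4 - (p 0 + p 1 + p 2), p 0, p 1, p 2]

/-- Single-qubit Pauli channel `E_p(ρ) = Σ_k (p_k/4) σ_k ρ σ_k`. -/
def pauliCh (p : Fin 3 → ℝ) (ρ : Mat2) : Mat2 :=
  ∑ k : Fin 4, ((pw p k / 4 : ℝ) : ℂ) • (pauli k * ρ * pauli k)

/-- `E_p ⊗ id` acting on two-qubit matrices. -/
def pauliFst (p : Fin 3 → ℝ) (ρ : Mat4) : Mat4 :=
  ∑ k : Fin 4, ((pw p k / 4 : ℝ) : ℂ) • ((pauli k ⊗ₖ 1) * ρ * (pauli k ⊗ₖ 1))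

/-- Local Pauli channel `E_p ⊗ E_p'` acting on two-qubit matrices. -/
def pauliLoc (p p' : Fin 3 → ℝ) (ρ : Mat4) : Mat4 :=
  ∑ k : Fin 4, ∑ l : Fin 4,
    ((pw p k * pw p' l / 16 : ℝ) : ℂ) •
      ((pauli k ⊗ₖ pauli l) * ρ * (pauli k ⊗ₖ pauli l))

/-- Partial transpose on the first qubit. -/
def ptranspose (ρ : Mat4) : Mat4 := fun x y => ρ (y.1, x.2) (x.1, y.2)

/-- Smallest (real) eigenvalue of a matrix. -/
def lambdaMin (A : Mat4) : ℝ :=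
  sInf {c : ℝ | ∃ v : Fin 2 × Fin 2 → ℂ, v ≠ 0 ∧ A *ᵥ v = (c : ℂ) • v}

/-- Measure of entanglement `M(ρ) = max (0, −2 λ_min(ρ^{T₁}))`. -/
def entMeasure (ρ : Mat4) : ℝ := max 0 (-2 * lambdaMin (ptranspose ρ))

/-- Two-qubit density matrix. -/
def IsDensity (ρ : Mat4) : Prop := ρ.PosSemidef ∧ ρ.trace = 1

/-- Depolarizing channel `D_q(ρ) = (1−q)·tr(ρ)·I/2 + q·ρ`. -/
def depol (q : ℝ) (ρ : Mat2) : Mat2 :=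
  (((1 - q : ℝ) : ℂ) * ρ.trace / 2) • (1 : Mat2) + ((q : ℝ) : ℂ) • ρ

/-- Basis vector `|ij⟩` of the two-qubit space. -/
def ket2 (i j : Fin 2) : (Fin 2 × Fin 2) → ℂ := fun x => if x = (i, j) then 1 else 0

/-- The four Bell states `|Ψ⁰⟩, |Ψ¹⟩, |Ψ²⟩, |Ψ³⟩`. -/
def bell : Fin 4 → ((Fin 2 × Fin 2) → ℂ) :=
  ![(((Real.sqrt 2 : ℝ) : ℂ))⁻¹ • (ket2 0 0 + ket2 1 1),
    (((Real.sqrt 2 : ℝ) : ℂ))⁻¹ • (ket2 0 1 + ket2 1 0),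
    (((Real.sqrt 2 : ℝ) : ℂ) * Complex.I)⁻¹ • (ket2 0 1 - ket2 1 0),
    (((Real.sqrt 2 : ℝ) : ℂ))⁻¹ • (ket2 0 0 - ket2 1 1)]

/-- Rank-one projector `|ψ⟩⟨ψ|`. -/
def proj (ψ : (Fin 2 × Fin 2) → ℂ) : Mat4 := fun a b => ψ a * (starRingEnd ℂ) (ψ b)

/-- Pauli-channel probability vector of the phase-flip channel `E³_Ω`. -/
def phaseVec (Ω : ℝ) : Fin 3 → ℝ := ![0, 0, 3 * Ω]

/-- `|+⟩ = (|0⟩+|1⟩)/√2`. -/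
def plusK : Fin 2 → ℂ := fun _ => (((Real.sqrt 2 : ℝ) : ℂ))⁻¹

/-- `|−⟩ = (|0⟩−|1⟩)/√2`. -/
def minusK : Fin 2 → ℂ := fun i =>
  if i = 0 then (((Real.sqrt 2 : ℝ) : ℂ))⁻¹ else -(((Real.sqrt 2 : ℝ) : ℂ))⁻¹

/-- The lower-bound state `|ψ_low(θ)⟩ = cos(θ/2)|+⟩|+⟩ + i sin(θ/2)|−⟩|−⟩`. -/
def psiLow (θ : ℝ) : (Fin 2 × Fin 2) → ℂ := fun x =>
  ((Real.cos (θ / 2) : ℝ) : ℂ) * (plusK x.1 * plusK x.2) +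
    Complex.I * ((Real.sin (θ / 2) : ℝ) : ℂ) * (minusK x.1 * minusK x.2)


section EntAuxSec
set_option maxHeartbeats 1600000
set_option maxRecDepth 4096
namespace EntAux

/-- The partially transposed matrix after local phase flips, abstractly. -/
def Aeta (x y η : ℝ) : Mat4 := fun a b =>
  (1/4:ℂ) * (if a.1 = b.1 then 1 else (η:ℂ)) * (if a.2 = b.2 then 1 else (η:ℂ)) *
    (if ((a.1 = b.1) ↔ (a.2 = b.2)) then 1
      else ((x:ℂ) + (if a.1 = b.2 then -1 else 1) * Complex.I * y))

def w1 : (Fin 2 × Fin 2) → ℂ := fun _ => 1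
def w2 : (Fin 2 × Fin 2) → ℂ := fun p => if p.1 = p.2 then 1 else -1
def w3 : (Fin 2 × Fin 2) → ℂ := fun p =>
  if p = (0,0) then 1 else if p = (0,1) then -Complex.I else if p = (1,0) then Complex.I else -1
def w4 : (Fin 2 × Fin 2) → ℂ := fun p =>
  if p = (0,0) then 1 else if p = (0,1) then Complex.I else if p = (1,0) then -Complex.I else -1

lemma eig1 (x y η : ℝ) : Aeta x y η *ᵥ w1 = (((1+η^2+2*η*x)/4 : ℝ):ℂ) • w1 := by
  funext p
  fin_cases p <;>
  · simp [Matrix.mulVec, dotProduct, Fintype.sum_prod_type, Fin.sum_univ_two, Aeta, w1,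
      Prod.ext_iff, Fin.ext_iff, Complex.ext_iff, ← Complex.ofReal_pow]
    try constructor <;> ring
    try ring

lemma eig2 (x y η : ℝ) : Aeta x y η *ᵥ w2 = (((1+η^2-2*η*x)/4 : ℝ):ℂ) • w2 := by
  funext p
  fin_cases p <;>
  · simp [Matrix.mulVec, dotProduct, Fintype.sum_prod_type, Fin.sum_univ_two, Aeta, w2,
      Prod.ext_iff, Fin.ext_iff, Complex.ext_iff, ← Complex.ofReal_pow, -Fin.val_eq_zero_iff]
    try constructor <;> ring
    try ring

lemma eig3 (x y η : ℝ) : Aeta x y η *ᵥ w3 = (((1-η^2+2*η*y)/4 : ℝ):ℂ) • w3 := by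
  funext p
  fin_cases p <;>
  · simp [Matrix.mulVec, dotProduct, Fintype.sum_prod_type, Fin.sum_univ_two, Aeta, w3,
      Prod.ext_iff, Fin.ext_iff, Complex.ext_iff, ← Complex.ofReal_pow, -Fin.val_eq_zero_iff]
    try constructor <;> ring
    try ring

lemma eig4 (x y η : ℝ) : Aeta x y η *ᵥ w4 = (((1-η^2-2*η*y)/4 : ℝ):ℂ) • w4 := by
  funext p
  fin_cases p <;>
  · simp [Matrix.mulVec, dotProduct, Fintype.sum_prod_type, Fin.sum_univ_two, Aeta, w4,
      Prod.ext_iff, Fin.ext_iff, Complex.ext_iff, ← Complex.ofReal_pow, -Fin.val_eq_zero_iff]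
    try constructor <;> ring
    try ring

lemma transp (x y η : ℝ) : (Aeta x y η)ᵀ = Aeta x (-y) η := by
  ext a b
  fin_cases a <;> fin_cases b <;>
  · simp [Aeta, Matrix.transpose_apply, Prod.ext_iff, Fin.ext_iff]
    try ring

lemma key (x y η c : ℝ) (v : Fin 2 × Fin 2 → ℂ) (hv : Aeta x y η *ᵥ v = (c:ℂ) • v)
    (w : Fin 2 × Fin 2 → ℂ) (lam : ℝ)
    (hw : Aeta x (-y) η *ᵥ w = ((lam : ℝ):ℂ) • w) :
    ((lam : ℂ) - (c:ℂ)) * (w ⬝ᵥ v) = 0 := by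
  have h1 : w ⬝ᵥ (Aeta x y η *ᵥ v) = (c:ℂ) * (w ⬝ᵥ v) := by
    rw [hv, dotProduct_smul, smul_eq_mul]
  have h2 : w ⬝ᵥ (Aeta x y η *ᵥ v) = (lam:ℂ) * (w ⬝ᵥ v) := by
    rw [Matrix.dotProduct_mulVec, ← Matrix.mulVec_transpose, transp, hw,
      smul_dotProduct, smul_eq_mul]
  rw [sub_mul, h1.symm.trans h2]
  ring

lemma spec_eq (x y η : ℝ) :
    {c : ℝ | ∃ v : Fin 2 × Fin 2 → ℂ, v ≠ 0 ∧ Aeta x y η *ᵥ v = (c:ℂ) • v}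
      = {(1+η^2+2*η*x)/4, (1+η^2-2*η*x)/4, (1-η^2+2*η*y)/4, (1-η^2-2*η*y)/4} := by
  ext c
  simp only [Set.mem_setOf_eq, Set.mem_insert_iff, Set.mem_singleton_iff]
  constructor
  · rintro ⟨v, hv0, hv⟩
    by_contra hc
    push_neg at hc
    obtain ⟨h1, h2, h3, h4⟩ := hc
    have k1 := key x y η c v hv w1 _ (eig1 x (-y) η)
    have k2 := key x y η c v hv w2 _ (eig2 x (-y) η)
    have e3 : ((1-η^2+2*η*(-y))/4 : ℝ) = (1-η^2-2*η*y)/4 := by ring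
    have e4 : ((1-η^2-2*η*(-y))/4 : ℝ) = (1-η^2+2*η*y)/4 := by ring
    have k3 := key x y η c v hv w3 ((1-η^2-2*η*y)/4) (by rw [← e3]; exact eig3 x (-y) η)
    have k4 := key x y η c v hv w4 ((1-η^2+2*η*y)/4) (by rw [← e4]; exact eig4 x (-y) η)
    have ne1 : ((((1+η^2+2*η*x)/4 : ℝ)):ℂ) - (c:ℂ) ≠ 0 := by
      rw [sub_ne_zero]; exact_mod_cast (Ne.symm h1)
    have ne2 : ((((1+η^2-2*η*x)/4 : ℝ)):ℂ) - (c:ℂ) ≠ 0 := by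
      rw [sub_ne_zero]; exact_mod_cast (Ne.symm h2)
    have ne3 : ((((1-η^2-2*η*y)/4 : ℝ)):ℂ) - (c:ℂ) ≠ 0 := by
      rw [sub_ne_zero]; exact_mod_cast (Ne.symm h4)
    have ne4 : ((((1-η^2+2*η*y)/4 : ℝ)):ℂ) - (c:ℂ) ≠ 0 := by
      rw [sub_ne_zero]; exact_mod_cast (Ne.symm h3)
    have s1 := (mul_eq_zero.mp k1).resolve_left ne1
    have s2 := (mul_eq_zero.mp k2).resolve_left ne2
    have s3 := (mul_eq_zero.mp k3).resolve_left ne3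
    have s4 := (mul_eq_zero.mp k4).resolve_left ne4
    simp only [dotProduct, Fintype.sum_prod_type, Fin.sum_univ_two, w1, w2, w3, w4] at s1 s2 s3 s4
    norm_num [Prod.ext_iff, Fin.ext_iff] at s1 s2 s3 s4
    apply hv0
    funext p
    fin_cases p
    · show v (0,0) = 0
      linear_combination s1/4 + s2/4 + s3/4 + s4/4
    · show v (0,1) = 0
      linear_combination s1/4 - s2/4 + (Complex.I)*s3/4 - Complex.I*s4/4
        + ((v (0,1) - v (1,0))/2) * Complex.I_sq
    · show v (1,0) = 0
      linear_combination s1/4 - s2/4 - (Complex.I)*s3/4 + Complex.I*s4/4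
        - ((v (0,1) - v (1,0))/2) * Complex.I_sq
    · show v (1,1) = 0
      linear_combination s1/4 + s2/4 - s3/4 - s4/4
  · intro hc
    have hw1 : w1 ≠ 0 := fun h => by simpa [w1] using congrFun h (0,0)
    have hw2 : w2 ≠ 0 := fun h => by simpa [w2] using congrFun h (0,0)
    have hw3 : w3 ≠ 0 := fun h => by simpa [w3] using congrFun h (0,0)
    have hw4 : w4 ≠ 0 := fun h => by simpa [w4] using congrFun h (0,0)
    rcases hc with h | h | h | h <;> subst h
    · exact ⟨w1, hw1, eig1 x y η⟩
    · exact ⟨w2, hw2, eig2 x y η⟩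
    · exact ⟨w3, hw3, eig3 x y η⟩
    · exact ⟨w4, hw4, eig4 x y η⟩

lemma psiLow_apply (θ : ℝ) (p : Fin 2 × Fin 2) :
    psiLow θ p = if p.1 = p.2
      then (1/2:ℂ) * (((Real.cos (θ/2) : ℝ):ℂ) + Complex.I * ((Real.sin (θ/2) : ℝ):ℂ))
      else (1/2:ℂ) * (((Real.cos (θ/2) : ℝ):ℂ) - Complex.I * ((Real.sin (θ/2) : ℝ):ℂ)) := by
  have h2 : ((Real.sqrt 2 : ℝ):ℂ) * ((Real.sqrt 2 : ℝ):ℂ) = 2 := by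
    rw [← Complex.ofReal_mul, Real.mul_self_sqrt (by norm_num)]
    norm_num
  have key : ((Real.sqrt 2:ℝ):ℂ)⁻¹ * ((Real.sqrt 2:ℝ):ℂ)⁻¹ = (1/2:ℂ) := by
    rw [← mul_inv, h2]
    norm_num
  fin_cases p <;>
    simp [psiLow, plusK, minusK, -Complex.ofReal_cos, -Complex.ofReal_sin] <;>
    first
      | linear_combination (((Real.cos (θ/2) : ℝ):ℂ) + Complex.I * ((Real.sin (θ/2) : ℝ):ℂ)) * key
      | linear_combination (((Real.cos (θ/2) : ℝ):ℂ) - Complex.I * ((Real.sin (θ/2) : ℝ):ℂ)) * key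
      | linear_combination (2 * Complex.I * ((Real.sin (θ/2) : ℝ):ℂ)) * key
      | linear_combination (-2 * Complex.I * ((Real.sin (θ/2) : ℝ):ℂ)) * key

lemma P1 (θ : ℝ) :
    ptranspose (proj (psiLow θ)) = Aeta (Real.cos θ) (Real.sin θ) 1 := by
  have h1 : Real.sin (θ/2)^2 + Real.cos (θ/2)^2 = 1 := Real.sin_sq_add_cos_sq _
  have hc : Real.cos θ = Real.cos (θ/2)^2 - Real.sin (θ/2)^2 := by
    have h := Real.cos_two_mul (θ/2)
    rw [show 2*(θ/2) = θ by ring] at h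
    linarith
  have hs : Real.sin θ = 2 * Real.sin (θ/2) * Real.cos (θ/2) := by
    have h := Real.sin_two_mul (θ/2)
    rw [show 2*(θ/2) = θ by ring] at h
    linarith
  ext a b
  rw [hc, hs]
  fin_cases a <;> fin_cases b <;>
  · simp [ptranspose, proj, psiLow_apply, Aeta, Prod.ext_iff, Fin.ext_iff, Complex.ext_iff,
      _root_.map_mul, map_add, map_sub, map_div₀, _root_.map_one, _root_.map_ofNat,
      Complex.conj_ofReal, Complex.conj_I,
      ← Complex.ofReal_pow, -Complex.ofReal_cos, -Complex.ofReal_sin]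
    try constructor <;> nlinarith [h1]
    try nlinarith [h1]

/-- phase-flip channel acts entrywise. -/
lemma pauliLoc_phase (Ω : ℝ) (ρ : Mat4) :
    pauliLoc (phaseVec Ω) (phaseVec Ω) ρ = fun a b =>
      (if a.1 = b.1 then 1 else ((1 - 3*Ω/2 : ℝ):ℂ)) *
      (if a.2 = b.2 then 1 else ((1 - 3*Ω/2 : ℝ):ℂ)) * ρ a b := by
  ext a b
  fin_cases a <;> fin_cases b <;>
  · simp [pauliLoc, Fin.sum_univ_four, pw, phaseVec, pauli, Matrix.mul_apply,
      Fintype.sum_prod_type, Fin.sum_univ_two, kroneckerMap_apply, Prod.ext_iff, Fin.ext_iff,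
      Matrix.one_apply, Prod.fst_zero, Prod.snd_zero, -Fin.val_eq_zero_iff]
    push_cast
    ring

lemma pt_phase (θ Ω : ℝ) :
    ptranspose (pauliLoc (phaseVec Ω) (phaseVec Ω) (proj (psiLow θ)))
      = Aeta (Real.cos θ) (Real.sin θ) (1 - 3*Ω/2) := by
  ext a b
  show (pauliLoc (phaseVec Ω) (phaseVec Ω) (proj (psiLow θ))) (b.1, a.2) (a.1, b.2) = _
  rw [pauliLoc_phase]
  show (if b.1 = a.1 then 1 else ((1 - 3*Ω/2 : ℝ):ℂ)) *
      (if a.2 = b.2 then 1 else ((1 - 3*Ω/2 : ℝ):ℂ)) *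
      ptranspose (proj (psiLow θ)) a b = _
  rw [P1]
  fin_cases a <;> fin_cases b <;>
  · simp [Aeta, Prod.ext_iff, Fin.ext_iff]
    try push_cast
    try ring

lemma sInf_quad (a b c d : ℝ) : sInf ({a,b,c,d} : Set ℝ) = a ⊓ (b ⊓ (c ⊓ d)) := by
  rw [csInf_insert (Set.toFinite _).bddBelow ⟨d, by simp⟩,
      csInf_insert (Set.toFinite _).bddBelow ⟨d, by simp⟩,
      csInf_insert (Set.toFinite _).bddBelow ⟨d, by simp⟩,
      csInf_singleton]

lemma final_core (p q m : ℝ) (hp : 0 ≤ p) (hq : 0 ≤ q) :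
    max 0 (-2 * (p ⊓ (q ⊓ m))) = max 0 (-2 * m) := by
  rcases le_total m q with h | h
  · rw [inf_eq_right.mpr h]
    rcases le_total m p with h' | h'
    · rw [inf_eq_right.mpr h']
    · rw [inf_eq_left.mpr h']
      rw [max_eq_left (by linarith), max_eq_left (by linarith)]
  · rw [inf_eq_left.mpr h]
    rw [max_eq_left, max_eq_left]
    · linarith
    · have : 0 ≤ p ⊓ q := le_inf hp hq
      linarith

lemma final_calc (x y η : ℝ) (hx0 : 0 ≤ x) (hx1 : x ≤ 1) (hy0 : 0 ≤ y) (hy1 : y ≤ 1)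
    (hη : |η| ≤ 1) :
    max 0 (-2 * (((1+η^2+2*η*x)/4) ⊓ (((1+η^2-2*η*x)/4) ⊓ (((1-η^2+2*η*y)/4) ⊓ ((1-η^2-2*η*y)/4)))))
      = max 0 (y * |η| + η^2/2 - 1/2) := by
  have h1p : (0:ℝ) ≤ (1+η^2+2*η*x)/4 := by
    nlinarith [sq_nonneg (η+x), sq_nonneg (η-x), mul_nonneg hx0 hx0, sq_nonneg η]
  have h2p : (0:ℝ) ≤ (1+η^2-2*η*x)/4 := by
    nlinarith [sq_nonneg (η+x), sq_nonneg (η-x), mul_nonneg hx0 hx0, sq_nonneg η]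
  rcases abs_cases η with ⟨he, hsgn⟩ | ⟨he, hsgn⟩
  · have h34 : ((1-η^2+2*η*y)/4 : ℝ) ⊓ ((1-η^2-2*η*y)/4) = (1-η^2-2*η*y)/4 :=
      inf_eq_right.mpr (by nlinarith)
    rw [he, h34, final_core _ _ _ h1p h2p]
    congr 1
    ring
  · have h34 : ((1-η^2+2*η*y)/4 : ℝ) ⊓ ((1-η^2-2*η*y)/4) = (1-η^2+2*η*y)/4 :=
      inf_eq_left.mpr (by nlinarith)
    rw [he, h34, final_core _ _ _ h1p h2p]
    congr 1
    ring

end EntAux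
end EntAuxSec

/-- lower bound of entanglement reduction — the state `|ψ_low(θ)⟩`
through local phase-flip channels. -/
theorem entMeasure_phaseflip_lower (θ Ω : ℝ)
    (hθ : θ ∈ Set.Icc (0 : ℝ) (Real.pi / 2)) (hΩ : Ω ∈ Set.Icc (0 : ℝ) (4/3)) :
    entMeasure (proj (psiLow θ)) = Real.sin θ ∧
    entMeasure (pauliLoc (phaseVec Ω) (phaseVec Ω) (proj (psiLow θ)))
      = max 0 (Real.sin θ * |1 - 3 * Ω / 2| + (1/2) * (1 - 3 * Ω / 2) ^ 2 - 1/2) := by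
  obtain ⟨hth0, hth1⟩ := hθ
  obtain ⟨hW0, hW1⟩ := hΩ
  have hpi := Real.pi_pos
  have hx0 : 0 ≤ Real.cos θ := Real.cos_nonneg_of_mem_Icc ⟨by linarith, hth1⟩
  have hx1 := Real.cos_le_one θ
  have hy0 : 0 ≤ Real.sin θ := Real.sin_nonneg_of_nonneg_of_le_pi hth0 (by linarith)
  have hy1 := Real.sin_le_one θ
  constructor
  · unfold entMeasure lambdaMin
    rw [EntAux.P1, EntAux.spec_eq, EntAux.sInf_quad,
        EntAux.final_calc _ _ 1 hx0 hx1 hy0 hy1 (by norm_num), abs_one,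
        max_eq_right (by nlinarith)]
    ring
  · unfold entMeasure lambdaMin
    rw [EntAux.pt_phase, EntAux.spec_eq, EntAux.sInf_quad,
        EntAux.final_calc _ _ _ hx0 hx1 hy0 hy1 (abs_le.mpr ⟨by linarith, by linarith⟩)]
    congr 1
    ring
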